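/- arXiv:1510.02807 — 6 statements merged into one kernel-verified Lean document; each statement's English description precedes it below -/
import Mathlib

section
/- Let a ≥ 2 be an integer and let w = φ^∞(0) be the fixed point of φ(n) = 0^{a−1}·(n+1) on ℕ. Then w is a-power-free: no factor of w is of the form v^a for a nonempty word v. -/
/-- The `a/b`-power of a word `v` (whose length should be divisible by `b`):
`⌊a/b⌋` copies of `v` followed by the prefix of `v` of length `|v|·(a mod b)/b`. -/
def abPow (a b : ℕ) (v : List ℕ) : List ℕ :=
  (List.replicate (a / b) v).flatten ++ v.take (v.length * (a % b) / b)

/-- `w` is an `a/b`-power. -/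
def IsAbPower (a b : ℕ) (w : List ℕ) : Prop :=
  ∃ v : List ℕ, v ≠ [] ∧ b ∣ v.length ∧ w = abPow a b v

/-- A finite word is `a/b`-power-free if none of its factors is an `a/b`-power. -/
def AbPowerFree (a b : ℕ) (w : List ℕ) : Prop :=
  ∀ f : List ℕ, f <:+: w → ¬ IsAbPower a b f

/-- `f` is a factor of the infinite word `w`. -/
def InfFactor (w : ℕ → ℕ) (f : List ℕ) : Prop :=
  ∃ i : ℕ, f = (List.range f.length).map fun j => w (i + j)

/-- An infinite word is `a/b`-power-free if none of its factors is an `a/b`-power. -/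
def AbPowerFreeSeq (a b : ℕ) (w : ℕ → ℕ) : Prop :=
  ∀ f : List ℕ, InfFactor w f → ¬ IsAbPower a b f

/-!
The nonzero letters of `w` sit exactly at the positions `≡ a - 1 (mod a)`, and the letter at
`a * q + (a - 1)` is `w q + 1`. If `w` is `p`-periodic on a window of length `a * p`, comparing a
nonzero letter with the one `p` places away forces `a ∣ p`; reading off the letters at the
positions `≡ a - 1` of the window then shows that `w` is `p / a`-periodic on a window of length
`p` starting at the `a`-quotient of the original start. This descent cannot go on forever.
-/

lemma List.getElem?_flatten_replicate_add_length {α : Type*} (v : List α) (n j : ℕ)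
    (hj : j + v.length < n * v.length) :
    (replicate n v).flatten[j + v.length]? = (replicate n v).flatten[j]? := by
  obtain _ | n := n
  · simp at hj
  have hj' : j < (replicate n v).flatten.length := by
    simp only [length_flatten, map_replicate, sum_replicate, smul_eq_mul]; nlinarith
  calc (replicate (n + 1) v).flatten[j + v.length]?
      = (v ++ (replicate n v).flatten)[j + v.length]? := by rw [replicate_succ, flatten_cons]
    _ = (replicate n v).flatten[j]? := by rw [getElem?_append_right (by omega)]; simp
    _ = ((replicate n v).flatten ++ v)[j]? := (getElem?_append_left hj').symm
    _ = (replicate (n + 1) v).flatten[j]? := by rw [replicate_succ', flatten_append]; simp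

/-- An `a`-power `v ^ a` with `|v| = p` occurs in `w` at position `i`. -/
def HasPowerAt (w : ℕ → ℕ) (a p i : ℕ) : Prop :=
  ∀ j, j + p < a * p → w (i + j + p) = w (i + j)

lemma hasPowerAt_of_infFactor {w : ℕ → ℕ} {a : ℕ} {v : List ℕ}
    (hv : InfFactor w (List.replicate a v).flatten) : ∃ i, HasPowerAt w a v.length i := by
  obtain ⟨i, hi⟩ := hv
  have hget : ∀ j < a * v.length, (List.replicate a v).flatten[j]? = some (w (i + j)) := by
    intro j hj
    rw [hi]
    simp [hj]
  refine ⟨i, fun j hj => ?_⟩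
  have := List.getElem?_flatten_replicate_add_length v a j hj
  rw [hget _ hj, hget _ (by omega)] at this
  simpa [Nat.add_assoc] using this

section FixedPoint

variable {a : ℕ} {w : ℕ → ℕ}

lemma mod_eq_of_fixedPoint_ne_zero (ha : 0 < a)
    (h0 : ∀ i r : ℕ, r ≤ a - 2 → w (a * i + r) = 0) {n : ℕ} (hn : w n ≠ 0) :
    n % a = a - 1 := by
  by_contra h
  have hlt := Nat.mod_lt n ha
  exact hn (Nat.div_add_mod n a ▸ h0 (n / a) (n % a) (by omega))

lemma dvd_of_hasPowerAt (ha : 2 ≤ a)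
    (h0 : ∀ i r : ℕ, r ≤ a - 2 → w (a * i + r) = 0)
    (h1 : ∀ i : ℕ, w (a * i + (a - 1)) = w i + 1) {p i : ℕ} (hp : 0 < p)
    (hpow : HasPowerAt w a p i) : a ∣ p := by
  set x := a * (i / a) + (a - 1)
  have hx : w x ≠ 0 := by simp [x, h1]
  have hix : i ≤ x ∧ x < i + a := by
    have := Nat.div_add_mod i a; have := Nat.mod_lt i (show 0 < a by omega); omega
  have hap : 2 * p ≤ a * p := Nat.mul_le_mul_right p ha
  have hap' : a ≤ a * p := Nat.le_mul_of_pos_right a hp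
  -- The window has length `≥ 2 * p`, so its first nonzero letter `x` has a partner `p` places
  -- to its right or to its left inside it.
  obtain ⟨y, hy, hyp⟩ : ∃ y, w y ≠ 0 ∧ w (y + p) ≠ 0 := by
    by_cases hright : x - i + p < a * p
    · refine ⟨x, hx, ?_⟩
      have := hpow (x - i) hright
      rw [show i + (x - i) = x by omega] at this
      rwa [this]
    · refine ⟨x - p, ?_, by rwa [show x - p + p = x by omega]⟩
      have := hpow (x - i - p) (by omega)
      rw [show i + (x - i - p) = x - p by omega, show x - p + p = x by omega] at this
      rwa [← this]
  have hmod : y + p ≡ y + 0 [MOD a] :=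
    (mod_eq_of_fixedPoint_ne_zero (by omega) h0 hyp).trans
      (mod_eq_of_fixedPoint_ne_zero (by omega) h0 hy).symm
  exact (Nat.modEq_zero_iff_dvd).mp (Nat.ModEq.add_left_cancel' y hmod)

lemma hasPowerAt_div (ha : 0 < a) (h1 : ∀ i : ℕ, w (a * i + (a - 1)) = w i + 1) {m i : ℕ}
    (hpow : HasPowerAt w a (a * m) i) : HasPowerAt w a m (i / a) := by
  intro t ht
  have hi := Nat.div_add_mod i a
  have hr := Nat.mod_lt i ha
  -- The letter `w (i / a + t)` is read off, plus one, at position `i + j` of the window.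
  set j := a - 1 - i % a + a * t
  have hpos : a * (i / a + t) + (a - 1) = i + j := by rw [Nat.mul_add]; omega
  have hj : j + a * m < a * (a * m) := by
    have : a * (t + m + 1) ≤ a * (a * m) := Nat.mul_le_mul_left a (by omega)
    rw [Nat.mul_add, Nat.mul_add] at this; omega
  have := hpow j hj
  rw [← hpos, show a * (i / a + t) + (a - 1) + a * m = a * (i / a + t + m) + (a - 1) by ring,
    h1, h1] at this
  omega

lemma not_hasPowerAt (ha : 2 ≤ a)
    (h0 : ∀ i r : ℕ, r ≤ a - 2 → w (a * i + r) = 0)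
    (h1 : ∀ i : ℕ, w (a * i + (a - 1)) = w i + 1) (p : ℕ) (hp : 0 < p) (i : ℕ) :
    ¬ HasPowerAt w a p i := by
  induction p using Nat.strong_induction_on generalizing i with
  | _ p ih =>
  intro hpow
  obtain ⟨m, rfl⟩ := dvd_of_hasPowerAt ha h0 h1 hp hpow
  have hm : 0 < m := Nat.pos_of_mul_pos_left hp
  exact ih m (by nlinarith) hm (i / a) (hasPowerAt_div (by omega) h1 hpow)

end FixedPoint

theorem fixedPoint_a_power_free (a : ℕ) (ha : 2 ≤ a) (w : ℕ → ℕ)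
    (h0 : ∀ i r : ℕ, r ≤ a - 2 → w (a * i + r) = 0)
    (h1 : ∀ i : ℕ, w (a * i + (a - 1)) = w i + 1) :
    ∀ v : List ℕ, v ≠ [] → ¬ InfFactor w ((List.replicate a v).flatten) := by
  intro v hv hfac
  obtain ⟨i, hpow⟩ := hasPowerAt_of_infFactor hfac
  exact not_hasPowerAt ha h0 h1 v.length (List.length_pos_iff.mpr hv) i hpow
end

section
/- Let s, t, m_max be non-negative integers with s ≠ 0, and let I_min, I_max be rationals with 1 < I_min < I_max ≤ 2. Let a_min be the minimum over all a ≥ 1 such that there exists b ≥ 1 with gcd(b, s) = 1 and I_min < a/b < I_max. Assume m_max ≤ (s − t/I_min)·(a_min − 2). Let a, b be relatively prime positive integers with I_min < a/b < I_max and gcd(b, s) = 1, and set k = s·a − t·b. Then k > 0 and ⌈(m_max·a − 1)/k⌉ + 1 ≤ a − 1. -/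
/-!
Since `1 < a/b < 2` forces `b < a < 2b`, every admissible numerator is at least `3`; in particular
`a ≥ a_min ≥ 3`, and the hypothesis on `m_max` then forces `c := s - t/I_min ≥ 0`. As `b/a < 1/I_min`,
`k/a = s - t·b/a ≥ c`, so `m_max·a ≤ c·(a - 2)·a ≤ k·(a - 2)`, which bounds the ceiling by `a - 2`.
-/

theorem three_le_of_one_lt_div_of_div_lt_two {a b : ℕ} (h1 : 1 < (a : ℚ) / b)
    (h2 : (a : ℚ) / b < 2) : 3 ≤ a := by
  have hb : (0 : ℚ) < b := by
    rcases Nat.eq_zero_or_pos b with rfl | hb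
    · norm_num at h1
    · exact_mod_cast hb
  rw [lt_div_iff₀ hb, one_mul] at h1
  rw [div_lt_iff₀ hb] at h2
  norm_cast at h1 h2
  omega

section OrderedField

variable {K : Type*} [Field K] [LinearOrder K] [IsStrictOrderedRing K] {s t I a b : K}

theorem mul_lt_mul_of_sub_div_nonneg (hs : 0 < s) (hI : 0 < I) (hb : 0 ≤ b) (hIb : I * b < a)
    (hc : 0 ≤ s - t / I) : t * b < s * a := by
  have ht : t ≤ s * I := (div_le_iff₀ hI).1 (sub_nonneg.1 hc)
  calc t * b ≤ s * I * b := by gcongr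
    _ = s * (I * b) := by ring
    _ < s * a := by gcongr

theorem sub_div_mul_le_of_mul_lt (hI : 0 < I) (ht : 0 ≤ t) (hIb : I * b < a) :
    (s - t / I) * a ≤ s * a - t * b := by
  have : t * b ≤ t / I * a :=
    calc t * b = t / I * (I * b) := by field_simp
      _ ≤ t / I * a := by gcongr
  linarith

end OrderedField

theorem ceil_bound_general (s t mmax : ℕ) (hs : s ≠ 0) (Imin Imax : ℚ)
    (h1 : 1 < Imin) (h3 : Imax ≤ 2) (amin : ℕ)
    (hamin2 : ∃ b : ℕ, 1 ≤ b ∧ Nat.gcd b s = 1 ∧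
      Imin < (amin : ℚ) / b ∧ (amin : ℚ) / b < Imax)
    (hamin3 : ∀ a' : ℕ, 1 ≤ a' →
      (∃ b : ℕ, 1 ≤ b ∧ Nat.gcd b s = 1 ∧ Imin < (a' : ℚ) / b ∧ (a' : ℚ) / b < Imax) →
      amin ≤ a')
    (hmmax : (mmax : ℚ) ≤ ((s : ℚ) - t / Imin) * ((amin : ℚ) - 2))
    (a b : ℕ) (ha : 0 < a) (hb : 0 < b)
    (hab1 : Imin < (a : ℚ) / b) (hab2 : (a : ℚ) / b < Imax) (hbs : Nat.gcd b s = 1)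
    (k : ℤ) (hk : k = (s : ℤ) * a - (t : ℤ) * b) :
    0 < k ∧ ⌈((mmax : ℚ) * a - 1) / (k : ℚ)⌉ + 1 ≤ (a : ℤ) - 1 := by
  have hI : 0 < Imin := one_pos.trans h1
  have hb' : (0 : ℚ) < b := by exact_mod_cast hb
  have hIb : Imin * b < a := (lt_div_iff₀ hb').1 hab1
  obtain ⟨b₀, -, -, hb₀1, hb₀2⟩ := hamin2
  have hamin : (3 : ℚ) ≤ amin := by
    exact_mod_cast three_le_of_one_lt_div_of_div_lt_two (h1.trans hb₀1) (hb₀2.trans_le h3)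
  have hamina : (amin : ℚ) ≤ a := by exact_mod_cast hamin3 a ha ⟨b, hb, hbs, hab1, hab2⟩
  have hc : 0 ≤ (s : ℚ) - t / Imin :=
    nonneg_of_mul_nonneg_left ((Nat.cast_nonneg _).trans hmmax) (by linarith)
  have hkQ : (k : ℚ) = s * a - t * b := by rw [hk]; push_cast; ring
  have hkpos : (0 : ℚ) < k := by
    rw [hkQ, sub_pos]
    exact mul_lt_mul_of_sub_div_nonneg (by positivity) hI hb'.le hIb hc
  have hkey : (mmax : ℚ) * a ≤ k * (a - 2) :=
    calc (mmax : ℚ) * a ≤ (s - t / Imin) * (amin - 2) * a := by gcongr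
      _ ≤ (s - t / Imin) * (a - 2) * a := by gcongr
      _ = (s - t / Imin) * a * (a - 2) := by ring
      _ ≤ k * (a - 2) := by
        rw [hkQ]
        gcongr
        · linarith
        · exact sub_div_mul_le_of_mul_lt hI (Nat.cast_nonneg _) hIb
  refine ⟨by exact_mod_cast hkpos, ?_⟩
  have hceil : ⌈((mmax : ℚ) * a - 1) / k⌉ ≤ a - 2 :=
    Int.ceil_le.2 ((div_le_iff₀ hkpos).2 (by push_cast; linarith))
  omega

theorem ceil_bound (s t mmax : ℕ) (hs : s ≠ 0) (Imin Imax : ℚ)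
    (h1 : 1 < Imin) (h2 : Imin < Imax) (h3 : Imax ≤ 2) (amin : ℕ)
    (hamin1 : 1 ≤ amin)
    (hamin2 : ∃ b : ℕ, 1 ≤ b ∧ Nat.gcd b s = 1 ∧
      Imin < (amin : ℚ) / b ∧ (amin : ℚ) / b < Imax)
    (hamin3 : ∀ a' : ℕ, 1 ≤ a' →
      (∃ b : ℕ, 1 ≤ b ∧ Nat.gcd b s = 1 ∧ Imin < (a' : ℚ) / b ∧ (a' : ℚ) / b < Imax) →
      amin ≤ a')
    (hmmax : (mmax : ℚ) ≤ ((s : ℚ) - t / Imin) * ((amin : ℚ) - 2))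
    (a b : ℕ) (ha : 0 < a) (hb : 0 < b) (hcop : Nat.Coprime a b)
    (hab1 : Imin < (a : ℚ) / b) (hab2 : (a : ℚ) / b < Imax) (hbs : Nat.gcd b s = 1)
    (k : ℤ) (hk : k = (s : ℤ) * a - (t : ℤ) * b) :
    0 < k ∧ ⌈((mmax : ℚ) * a - 1) / (k : ℚ)⌉ + 1 ≤ (a : ℤ) - 1 :=
  ceil_bound_general s t mmax hs Imin Imax h1 h3 amin hamin2 hamin3 hmmax a b ha hb hab1 hab2 hbs k
    hk
end

section
/- Let k ≥ 2 and d ≥ 0 be integers, let u be a word over ℕ of length k − 1 with letters u(0), …, u(k−2), and let φ be the k-uniform morphism on ℕ defined by φ(n) = u·(n+d). Suppose that for all n ≥ 0 the word u·(n+d) is not a perfect power (not of the form z^e with e ≥ 2). Then φ locates words of length k: for every word x of length k over ℕ there exists j with 0 ≤ j ≤ k−1 such that for every finite word w over ℕ, every occurrence of x as a factor of φ(w) begins at a position congruent to j modulo k. -/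
/-- Apply a morphism on `ℕ` to a finite word, by concatenation. -/
def morphApply (φ : ℕ → List ℕ) (w : List ℕ) : List ℕ := (w.map φ).flatten

/-- A `k`-uniform morphism `φ` locates words of length `ℓ`: every word of length `ℓ`
occurs in images `φ(w)` only at positions in a single residue class mod `k`. -/
def Locates (φ : ℕ → List ℕ) (k ℓ : ℕ) : Prop :=
  ∀ x : List ℕ, x.length = ℓ →
    ∃ j, ∀ w y z : List ℕ, morphApply φ w = y ++ x ++ z → y.length % k = j

/-!
Write `k = |u| + 1` and `v_a = u·(a+d)`. A factor of length `k` of `φ(w)` starting at a position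
`i ≡ r (mod k)` reads the tail of one block `v_a` from offset `r` and then the first `r` letters of
the next block, which are the first `r` letters of `u`: it is the rotation `v_a.rotate r`. If two
occurrences of `x` had residues `r ≠ r'`, then `v_a.rotate r = v_b.rotate r'`; comparing letter
counts gives `a = b`, so `v_a` equals a nontrivial rotation of itself. Then `v_a = s·t = t·s`
for nonempty `s, t`, and commuting words are powers of a common word, so `v_a` is a perfect power.
-/

namespace List

variable {α : Type*}

def IsProperPower (l : List α) : Prop :=
  ∃ (z : List α) (e : ℕ), 2 ≤ e ∧ z ≠ [] ∧ l = (replicate e z).flatten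

theorem flatten_replicate_add (z : List α) (e f : ℕ) :
    (replicate (e + f) z).flatten = (replicate e z).flatten ++ (replicate f z).flatten := by
  rw [replicate_add, flatten_append]

theorem exists_flatten_replicate_of_append_comm {s t : List α} (h : s ++ t = t ++ s) :
    ∃ (z : List α) (e f : ℕ), s = (replicate e z).flatten ∧ t = (replicate f z).flatten := by
  obtain ⟨n, hn⟩ : ∃ n, s.length + t.length = n := ⟨_, rfl⟩
  induction n using Nat.strong_induction_on generalizing s t with
  | _ n ih =>
    wlog hts : t.length ≤ s.length generalizing s t
    · obtain ⟨z, e, f, hs, ht⟩ := this h.symm (by omega) (by omega)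
      exact ⟨z, f, e, ht, hs⟩
    obtain ⟨s', rfl⟩ : t <+: s :=
      prefix_of_prefix_length_le (h ▸ prefix_append t s) (prefix_append s t) hts
    rcases eq_or_ne t [] with rfl | ht
    · exact ⟨s', 1, 0, by simp, by simp⟩
    have hlt : s'.length + t.length < n := by
      simpa [← hn] using length_pos_iff.mpr ht
    obtain ⟨z, e, f, rfl, rfl⟩ := ih _ hlt (by simpa using h) rfl
    exact ⟨z, f + e, f, (flatten_replicate_add z f e).symm, rfl⟩

theorem IsProperPower.of_rotate_eq_self {l : List α} {m : ℕ} (hm₀ : 0 < m) (hm : m < l.length)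
    (h : l.rotate m = l) : l.IsProperPower := by
  have hcomm : l.drop m ++ l.take m = l.take m ++ l.drop m := by
    rw [← rotate_eq_drop_append_take hm.le, h, take_append_drop]
  obtain ⟨z, e, f, hs, ht⟩ := exists_flatten_replicate_of_append_comm hcomm
  have ht₀ : l.take m ≠ [] := by simp [hm₀.ne', ne_nil_of_length_pos (hm₀.trans hm)]
  have he : e ≠ 0 := by
    rintro rfl
    simp [hm.not_ge] at hs
  have hf : f ≠ 0 := by
    rintro rfl
    exact ht₀ ht
  refine ⟨z, f + e, by omega, ?_, ?_⟩
  · rintro rfl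
    exact ht₀ (by simpa using ht)
  · calc l = l.take m ++ l.drop m := (take_append_drop m l).symm
      _ = _ := by rw [ht, hs, flatten_replicate_add]

theorem injOn_rotate_of_not_isProperPower {l : List α} (hl : ¬ l.IsProperPower) :
    Set.InjOn l.rotate (Set.Iio l.length) := by
  intro r hr r' hr' h
  wlog hle : r' ≤ r generalizing r r'
  · exact (this hr' hr h.symm (by omega)).symm
  by_contra hne
  refine hl (IsProperPower.of_rotate_eq_self (m := r - r') (by omega) (by simp at hr; omega) ?_)
  rw [← rotate_eq_rotate (n := r'), rotate_rotate, Nat.sub_add_cancel hle]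
  exact h

theorem eq_of_rotate_append_singleton_eq {u : List α} {a b : α} {r r' : ℕ}
    (ha : ¬ (u ++ [a]).IsProperPower) (hr : r < u.length + 1) (hr' : r' < u.length + 1)
    (h : (u ++ [a]).rotate r = (u ++ [b]).rotate r') : r = r' := by
  obtain rfl : a = b := by
    have : u ++ [a] ~ u ++ [b] := (rotate_perm _ r).symm.trans (h ▸ rotate_perm _ r')
    simpa using (perm_append_left_iff u).1 this
  exact injOn_rotate_of_not_isProperPower ha (by simpa using hr) (by simpa using hr') h

end List

open List

section

variable {φ : ℕ → List ℕ} {u : List ℕ} {g : ℕ → ℕ}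

theorem morphApply_cons (φ : ℕ → List ℕ) (a : ℕ) (w : List ℕ) :
    morphApply φ (a :: w) = φ a ++ morphApply φ w := by
  simp [morphApply]

theorem take_morphApply (hφ : ∀ n, φ n = u ++ [g n]) {w : List ℕ} {i : ℕ}
    (hu : i ≤ u.length) (hw : i ≤ (morphApply φ w).length) :
    (morphApply φ w).take i = u.take i := by
  cases w with
  | nil =>
    obtain rfl : i = 0 := by simpa [morphApply] using hw
    simp
  | cons a w => rw [morphApply_cons, hφ, append_assoc, take_append_of_le_length hu]

theorem exists_take_drop_morphApply_eq_rotate (hφ : ∀ n, φ n = u ++ [g n]) (w : List ℕ) (i : ℕ)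
    (hi : i + (u.length + 1) ≤ (morphApply φ w).length) :
    ∃ a, ((morphApply φ w).drop i).take (u.length + 1) =
      (u ++ [g a]).rotate (i % (u.length + 1)) := by
  induction w generalizing i with
  | nil => simp [morphApply] at hi
  | cons a w ih =>
    have hlen : (φ a).length = u.length + 1 := by simp [hφ]
    rw [morphApply_cons] at hi ⊢
    rcases le_or_gt (u.length + 1) i with hki | hik
    · obtain ⟨j, rfl⟩ := Nat.exists_eq_add_of_le hki
      obtain ⟨b, hb⟩ := ih j (by simp only [length_append, hlen] at hi; omega)
      refine ⟨b, ?_⟩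
      rw [drop_append, drop_eq_nil_of_le (by omega), nil_append, hlen, Nat.add_sub_cancel_left,
        Nat.add_mod_left, hb]
    · refine ⟨a, ?_⟩
      have hiu : i ≤ u.length := by omega
      rw [drop_append_of_le_length (by omega), take_append,
        take_of_length_le (by simp [hlen]), length_drop, hlen,
        show u.length + 1 - (u.length + 1 - i) = i by omega,
        take_morphApply hφ hiu (by simp only [length_append, hlen] at hi; omega),
        Nat.mod_eq_of_lt hik, rotate_eq_drop_append_take (by simp; omega), hφ,
        take_append_of_le_length hiu]

theorem exists_eq_rotate_of_morphApply_eq (hφ : ∀ n, φ n = u ++ [g n]) {w y x z : List ℕ}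
    (h : morphApply φ w = y ++ x ++ z) (hx : x.length = u.length + 1) :
    ∃ a, x = (u ++ [g a]).rotate (y.length % (u.length + 1)) := by
  obtain ⟨a, ha⟩ := exists_take_drop_morphApply_eq_rotate hφ w y.length (by simp [h, hx])
  refine ⟨a, ?_⟩
  rw [← ha, h, append_assoc, drop_left, ← hx, take_left]

end

theorem locates_of_not_power (k d : ℕ) (hk : 2 ≤ k) (u : List ℕ)
    (hu : u.length = k - 1)
    (φ : ℕ → List ℕ) (hφ : ∀ n : ℕ, φ n = u ++ [n + d])
    (hnp : ∀ n : ℕ, ¬ ∃ (z : List ℕ) (e : ℕ), 2 ≤ e ∧ z ≠ [] ∧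
      u ++ [n + d] = (List.replicate e z).flatten) :
    ∀ x : List ℕ, x.length = k →
      ∃ j < k, ∀ w y z : List ℕ, morphApply φ w = y ++ x ++ z → y.length % k = j := by
  intro x hx
  obtain rfl : k = u.length + 1 := by omega
  have hmod (n : ℕ) : n % (u.length + 1) < u.length + 1 := Nat.mod_lt _ u.length.succ_pos
  by_cases hocc : ∃ w y z, morphApply φ w = y ++ x ++ z
  · obtain ⟨w₀, y₀, z₀, h₀⟩ := hocc
    obtain ⟨a, rfl⟩ := exists_eq_rotate_of_morphApply_eq hφ h₀ hx
    refine ⟨y₀.length % (u.length + 1), hmod _, fun w y z h => ?_⟩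
    obtain ⟨b, hb⟩ := exists_eq_rotate_of_morphApply_eq hφ h hx
    exact (eq_of_rotate_append_singleton_eq (hnp a) (hmod _) (hmod _) hb).symm
  · exact ⟨0, by omega, fun w y z h => absurd ⟨w, y, z, h⟩ hocc⟩
end

section
/- Let a, b be relatively prime positive integers with 5/3 ≤ a/b < 2 and b odd, and let φ be the (2a−b)-uniform morphism on ℕ given by φ(n) = 0^{a−1} · 1 · 0^{a−b−1} · (n+1). Then for every finite word w over ℕ, the image φ(w) contains no a/b-power factor of length a. -/
/-!
In `φ(w)` the nonzero letters sit exactly at the positions congruent to `a - 1` or `2a - b - 1`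
modulo `2a - b`. An `a/b`-power of length `a` is `x y x` with `|x y| = b`, so it has period `b`,
and its zero pattern would have to be invariant under the shift by `b` inside a window of
length `a`. The gaps between consecutive nonzero positions are `a - b`, `a`, `a - b`, none of
which is `b`, and for `3b ≤ 2a` every window contains a nonzero position whose shift by `± b`
stays in the window and lands on a zero.
-/

theorem List.getElem?_append_add_length_of_prefix {α : Type*} {u v : List α}
    (h : v <+: u ++ v) {j : ℕ} (hj : j < v.length) :
    (u ++ v)[j + u.length]? = (u ++ v)[j]? := by
  obtain ⟨t, ht⟩ := h
  rw [List.getElem?_append_right (by omega), Nat.add_sub_cancel, ← ht,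
    List.getElem?_append_left hj]

theorem getElem?_abPow_add_length (a b : ℕ) (v : List ℕ) {j : ℕ}
    (hj : j + v.length < (abPow a b v).length) :
    (abPow a b v)[j + v.length]? = (abPow a b v)[j]? := by
  unfold abPow at *
  generalize a / b = q at *
  generalize v.length * (a % b) / b = m at *
  cases q with
  | zero =>
    simp only [List.replicate_zero, List.flatten_nil, List.nil_append, List.length_take] at hj
    omega
  | succ q =>
    have hvY : (List.replicate (q + 1) v).flatten ++ v.take m =
        v ++ ((List.replicate q v).flatten ++ v.take m) := by
      rw [List.replicate_succ, List.flatten_cons, List.append_assoc]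
    have hY : (List.replicate q v).flatten ++ v.take m <+:
        (List.replicate (q + 1) v).flatten ++ v.take m := by
      rw [List.replicate_succ', List.flatten_append, List.flatten_singleton, List.append_assoc]
      exact List.prefix_append_right_inj _ |>.mpr <|
        (List.take_prefix m v).trans (List.prefix_append v _)
    rw [hvY] at hj hY ⊢
    rw [List.length_append] at hj
    exact List.getElem?_append_add_length_of_prefix hY (by omega)

theorem length_abPow (a b : ℕ) {v : List ℕ} (hv : b ∣ v.length) :
    (abPow a b v).length = v.length / b * a := by
  obtain ⟨k, hk⟩ := hv
  rcases b.eq_zero_or_pos with rfl | hb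
  · simp_all [abPow]
  have htake : k * (a % b) ≤ b * k := by nlinarith [Nat.mod_lt a hb]
  simp only [abPow, List.length_append, List.length_flatten, List.map_replicate,
    List.sum_replicate, List.length_take, hk, smul_eq_mul, Nat.mul_assoc,
    Nat.mul_div_cancel_left _ hb, min_eq_left htake]
  nlinarith [Nat.div_add_mod a b]

theorem IsAbPower.getElem?_add_of_length_eq {a b : ℕ} {f : List ℕ} (hf : IsAbPower a b f)
    (hlen : f.length = a) {j : ℕ} (hj : j + b < a) : f[j + b]? = f[j]? := by
  obtain ⟨v, -, hbv, rfl⟩ := hf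
  have hvb : v.length = b := by
    have hk : v.length / b * a = 1 * a := by rw [← length_abPow a b hbv, hlen, one_mul]
    rw [← Nat.div_mul_cancel hbv, Nat.eq_of_mul_eq_mul_right (by omega) hk, one_mul]
  simpa only [hvb] using getElem?_abPow_add_length a b v (j := j) (by omega)

theorem getElem?_morphApply_mul_add {φ : ℕ → List ℕ} {L : ℕ} (hφ : ∀ n, (φ n).length = L)
    (w : List ℕ) (q : ℕ) {r : ℕ} (hr : r < L) :
    (morphApply φ w)[L * q + r]? = w[q]?.bind fun n => (φ n)[r]? := by
  induction w generalizing q with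
  | nil => simp [morphApply]
  | cons n w ih =>
    have hcons : morphApply φ (n :: w) = φ n ++ morphApply φ w := by simp [morphApply]
    rw [hcons]
    cases q with
    | zero => simp [List.getElem?_append_left (hφ n ▸ hr)]
    | succ q =>
      have hq : L * (q + 1) + r = L * q + r + (φ n).length := by rw [hφ, Nat.mul_succ]; omega
      rw [hq, List.getElem?_append_right (by omega), Nat.add_sub_cancel, ih]
      simp

theorem ne_zero_iff_of_getElem?_replicate_append_eq_some {c d m p x : ℕ} (hm : m ≠ 0)
    (h : (List.replicate c 0 ++ [1] ++ List.replicate d 0 ++ [m])[p]? = some x) :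
    x ≠ 0 ↔ p = c ∨ p = c + d + 1 := by
  simp only [List.getElem?_append, List.getElem?_replicate, List.length_append,
    List.length_replicate, List.length_singleton] at h
  split_ifs at h <;> simp_all <;> grind

def IsMarkerPos (a b p : ℕ) : Prop :=
  p % (2 * a - b) = a - 1 ∨ p % (2 * a - b) = 2 * a - b - 1

theorem ne_zero_iff_isMarkerPos {a b : ℕ} (hba : b < a) {φ : ℕ → List ℕ}
    (hφ : ∀ n : ℕ, φ n = List.replicate (a - 1) 0 ++ [1] ++
      List.replicate (a - b - 1) 0 ++ [n + 1])
    {w : List ℕ} {p x : ℕ} (h : (morphApply φ w)[p]? = some x) :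
    x ≠ 0 ↔ IsMarkerPos a b p := by
  have hlen : ∀ n, (φ n).length = 2 * a - b := fun n => by simp [hφ]; omega
  rw [← Nat.div_add_mod p (2 * a - b),
    getElem?_morphApply_mul_add hlen w _ (Nat.mod_lt _ (by omega))] at h
  obtain ⟨n, -, hn⟩ := Option.bind_eq_some_iff.mp h
  rw [hφ] at hn
  rw [ne_zero_iff_of_getElem?_replicate_append_eq_some n.succ_ne_zero hn, IsMarkerPos]
  omega

theorem isMarkerPos_iff_of_lt {a b p : ℕ} (hba : b < a) (hp : p < 2 * (2 * a - b)) :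
    IsMarkerPos a b p ↔
      p = a - 1 ∨ p = 2 * a - b - 1 ∨ p = 3 * a - b - 1 ∨ p = 4 * a - 2 * b - 1 := by
  unfold IsMarkerPos
  rcases Nat.lt_or_ge p (2 * a - b) with h | h
  · rw [Nat.mod_eq_of_lt h]; omega
  · rw [Nat.mod_eq_sub_mod h, Nat.mod_eq_of_lt (by omega)]; omega

/- After reducing `i` modulo `2a - b` to `r`, the witness moves a marker of the window
`[r, r + a)` by `± b` onto a non-marker, in the four cases `a - 1 < r`, `r < a - b`,
`2a - 2b - 1 < r ≤ a - 1` (where `3b ≤ 2a` is needed) and `a - b ≤ r ≤ 2a - 2b - 1`. -/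
theorem exists_not_isMarkerPos_add_iff {a b : ℕ} (hba : b < a) (hab : a < 2 * b)
    (h : 3 * b ≤ 2 * a) (i : ℕ) :
    ∃ j < a - b, ¬(IsMarkerPos a b (i + j + b) ↔ IsMarkerPos a b (i + j)) := by
  have hshift : ∀ j, IsMarkerPos a b (i + j) ↔ IsMarkerPos a b (i % (2 * a - b) + j) := by
    intro j; simp only [IsMarkerPos, Nat.mod_add_mod]
  simp only [add_assoc, hshift]
  have hr := Nat.mod_lt i (show 0 < 2 * a - b by omega)
  generalize i % (2 * a - b) = r at hr
  obtain ⟨j, hj⟩ : ∃ j, j =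
      if a - 1 < r then 2 * a - b - 1 - r
      else if r < a - b then a - 1 - b - r
      else if 2 * a - 2 * b - 1 < r then a - 1 - r
      else 2 * a - 2 * b - 1 - r := ⟨_, rfl⟩
  have hjab : j < a - b := by split_ifs at hj <;> omega
  refine ⟨j, hjab, ?_⟩
  rw [← add_assoc, isMarkerPos_iff_of_lt hba (by omega), isMarkerPos_iff_of_lt hba (by omega)]
  split_ifs at hj <;> omega

theorem no_short_abPower_in_image_general (a b : ℕ) (h1 : 5 * b ≤ 3 * a) (h2 : a < 2 * b)
    (φ : ℕ → List ℕ)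
    (hφ : ∀ n : ℕ, φ n = List.replicate (a - 1) 0 ++ [1] ++
      List.replicate (a - b - 1) 0 ++ [n + 1]) :
    ∀ (w f : List ℕ), f <:+: morphApply φ w → f.length = a → ¬ IsAbPower a b f := by
  intro w f hfac hlen hpow
  obtain ⟨i, -, hi⟩ := List.infix_iff_getElem?.mp hfac
  obtain ⟨j, hj, hne⟩ := exists_not_isMarkerPos_add_iff (by omega) h2 (by omega) i
  have hletter : ∀ k (hk : k < f.length), f[k] ≠ 0 ↔ IsMarkerPos a b (i + k) := fun k hk =>
    ne_zero_iff_isMarkerPos (by omega) hφ (by rw [add_comm]; exact hi k hk)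
  have hper : f[j + b] = f[j] := by
    have := hpow.getElem?_add_of_length_eq hlen (j := j) (by omega)
    rwa [List.getElem?_eq_getElem (by omega), List.getElem?_eq_getElem (by omega),
      Option.some_inj] at this
  apply hne
  rw [add_assoc, ← hletter (j + b) (by omega), ← hletter j (by omega), hper]

theorem no_short_abPower_in_image (a b : ℕ) (ha : 0 < a) (hb : 0 < b)
    (hcop : Nat.Coprime a b) (h1 : 5 * b ≤ 3 * a) (h2 : a < 2 * b) (hbodd : b % 2 = 1)
    (φ : ℕ → List ℕ)
    (hφ : ∀ n : ℕ, φ n = List.replicate (a - 1) 0 ++ [1] ++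
      List.replicate (a - b - 1) 0 ++ [n + 1]) :
    ∀ (w f : List ℕ), f <:+: morphApply φ w → f.length = a → ¬ IsAbPower a b f :=
  no_short_abPower_in_image_general a b h1 h2 φ hφ
end

section
/- Let a, b be relatively prime positive integers with 1 < a/b < 2 and let w be the lexicographically least a/b-power-free infinite word over ℕ (assumed to exist). For each letter value n ≥ 1 occurring in w, let i_n denote the position of the first occurrence of n in w. If for some n ≥ 1 there exist distinct positive integers m_0, m_1, …, m_{n−1} such that for each 0 ≤ c ≤ n−1 the letter c occurs at position i_n − m_c·b in w, then i_n − i_{n−1} ≥ n whenever additionally max(m_0,…,m_{n−1}) = m_{n−1} (first case of the argument). -/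
/-- Lexicographic order on infinite words over ℕ. -/
def SeqLexLe (w w' : ℕ → ℕ) : Prop :=
  ∀ i : ℕ, (∀ j < i, w j = w' j) → w i ≤ w' i

/-! The letter `n - 1` occurs at `i_n - m_{n-1} b`, so its first occurrence is no later;
and `m_0, …, m_{n-1}` are `n` distinct positive integers bounded by `m_{n-1}`, so `n ≤ m_{n-1} ≤ m_{n-1} b`. -/

theorem le_of_injOn_range_of_pos_of_le {n M : ℕ} {m : ℕ → ℕ}
    (hpos : ∀ c < n, 0 < m c) (hle : ∀ c < n, m c ≤ M)
    (hinj : ∀ c < n, ∀ c' < n, m c = m c' → c = c') : n ≤ M := by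
  have hcard := Finset.card_le_card_of_injOn m (s := Finset.range n) (t := Finset.Icc 1 M)
    (fun c hc => Finset.mem_Icc.2 ⟨hpos c (Finset.mem_range.1 hc), hle c (Finset.mem_range.1 hc)⟩)
    (fun c hc c' hc' => hinj c (Finset.mem_range.1 hc) c' (Finset.mem_range.1 hc'))
  simpa using hcard

theorem first_occurrence_gap_general (b : ℕ) (hb : 0 < b)
    (w : ℕ → ℕ)
    (n : ℕ) (hn : 1 ≤ n)
    (iN iP : ℕ)
    (hiP : w iP = n - 1 ∧ ∀ j < iP, w j ≠ n - 1)
    (m : ℕ → ℕ) (hmpos : ∀ c < n, 0 < m c)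
    (hminj : ∀ c < n, ∀ c' < n, m c = m c' → c = c')
    (hocc : ∀ c < n, m c * b ≤ iN ∧ w (iN - m c * b) = c)
    (hmax : ∀ c < n, m c ≤ m (n - 1)) :
    iP + n ≤ iN := by
  obtain ⟨hfits, hlast⟩ := hocc (n - 1) (by omega)
  have hiP_le : iP ≤ iN - m (n - 1) * b := not_lt.1 fun h => hiP.2 _ h hlast
  have hn_le : n ≤ m (n - 1) := le_of_injOn_range_of_pos_of_le hmpos hmax hminj
  have hm_le : m (n - 1) ≤ m (n - 1) * b := Nat.le_mul_of_pos_right _ hb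
  omega

theorem first_occurrence_gap (a b : ℕ) (ha : 0 < a) (hb : 0 < b)
    (hcop : Nat.Coprime a b) (h1 : b < a) (h2 : a < 2 * b)
    (w : ℕ → ℕ) (hfree : AbPowerFreeSeq a b w)
    (hleast : ∀ w' : ℕ → ℕ, AbPowerFreeSeq a b w' → SeqLexLe w w')
    (n : ℕ) (hn : 1 ≤ n)
    (iN iP : ℕ) (hiN : w iN = n ∧ ∀ j < iN, w j ≠ n)
    (hiP : w iP = n - 1 ∧ ∀ j < iP, w j ≠ n - 1)
    (m : ℕ → ℕ) (hmpos : ∀ c < n, 0 < m c)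
    (hminj : ∀ c < n, ∀ c' < n, m c = m c' → c = c')
    (hocc : ∀ c < n, m c * b ≤ iN ∧ w (iN - m c * b) = c)
    (hmax : ∀ c < n, m c ≤ m (n - 1)) :
    iP + n ≤ iN :=
  first_occurrence_gap_general b hb w n hn iN iP hiP m hmpos hminj hocc hmax
end

section
/- Let k ≥ 2 and d ≥ 0 be integers, let u be a word over ℕ of length k−1, let v be a nonempty finite word over ℕ, and let w : ℕ → ℕ be an infinite word satisfying, for all i ≥ 0: w(k·i + |v| + r) = u(r) for 0 ≤ r ≤ k−2, and w(k·i + |v| + k − 1) = w(i) + d. Then for all integers e ≥ 1, defining j_e := (k^e − 1)/(k − 1) · (|v| + k − 1), one has w(k^e · i + j_e) = w(i) + e·d for all i ≥ 0. -/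
theorem selfSimilar_column (k d : ℕ) (hk : 2 ≤ k) (u : List ℕ) (hu : u.length = k - 1)
    (v : List ℕ) (hv : v ≠ []) (w : ℕ → ℕ)
    (h0 : ∀ i r : ℕ, r ≤ k - 2 → w (k * i + v.length + r) = u.getD r 0)
    (h1 : ∀ i : ℕ, w (k * i + v.length + (k - 1)) = w i + d) :
    ∀ e : ℕ, 1 ≤ e → ∀ i : ℕ,
      w (k ^ e * i + (v.length + k - 1) * ((k ^ e - 1) / (k - 1))) = w i + e * d := by
  have hk1 : 1 ≤ k := le_trans (by norm_num) hk
  have hvl : 1 ≤ v.length := List.length_pos_iff.mpr hv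
  have hlen : v.length + k - 1 = v.length + (k - 1) := by omega
  intro e he
  induction e with
  | zero => omega
  | succ e ih =>
    intro i
    rcases Nat.eq_or_lt_of_le he with h|h
    · -- e+1 = 1
      have he0 : e = 0 := by omega
      subst he0
      rw [zero_add, pow_one, Nat.div_self (by omega), mul_one, hlen, ← add_assoc, h1 i, one_mul]
    · have he1 : 1 ≤ e := by omega
      have hdvd : (k - 1) ∣ (k ^ e - 1) := by
        have := Nat.sub_dvd_pow_sub_pow k 1 e
        simpa using this
      have hkle : k ≤ k ^ (e + 1) := by
        calc k = k ^ 1 := (pow_one k).symm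
        _ ≤ k ^ (e + 1) := Nat.pow_le_pow_right hk1 (by omega)
      have key : (k ^ (e + 1) - 1) = k * (k ^ e - 1) + (k - 1) := by
        have h1k : 1 ≤ k ^ e := Nat.one_le_pow _ _ (by omega)
        have h2 : k ^ (e + 1) = k * k ^ e := by ring
        have h3 : k * (k ^ e - 1) = k * k ^ e - k := by
          rw [Nat.mul_sub, mul_one]
        omega
      have hq : (k ^ (e + 1) - 1) / (k - 1) = k * ((k ^ e - 1) / (k - 1)) + 1 := by
        rw [key, Nat.add_div_right _ (by omega), Nat.mul_div_assoc k hdvd]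
      rw [hq]
      have harith : k ^ (e + 1) * i + (v.length + k - 1) * (k * ((k ^ e - 1) / (k - 1)) + 1)
          = k * (k ^ e * i + (v.length + k - 1) * ((k ^ e - 1) / (k - 1))) + v.length + (k - 1) := by
        rw [hlen, pow_succ]; ring
      rw [harith, h1, ih he1 i]
      ring
end
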